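/- Let p be an odd prime and G a finite p-group of exponent p^2 such that every maximal subgroup of G is powerful. Then the nilpotency class of G is at most 3. -/

import Mathlib

/-!
A maximal subgroup `M` of `G` has index `p` and is powerful of exponent dividing `p²`. Induction
on `|M|` through `M / Z(M)` shows that `[c, y]` is central for every `c ∈ M^p`; then
the `p`-th powers commute and generate a subgroup of exponent `p` containing `[M, M]`, and
`[x ^ p, y] = [x, y] ^ p [x, [x, y]] ^ (p choose 2) = 1` because `p` is odd. Hence `M^p` is
central and `M` has class at most `2`.

The bound on `G` is MacDonald's argument. Passing to the quotient by the fifth term of the lower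
central series, `[[a, g], h]` (`a ∈ G'`) is central and multiplicative in each argument, and it
vanishes as soon as `g` and `h` lie in a common maximal subgroup, which contains `G'` and has
class `2`. So it is alternating in `g, h`; if `G = ⟨g, h⟩`, the Hall–Witt identity gives
`[[[g, h], g], h] ^ 2 = 1`, hence `[[[g, h], g], h] = 1` as `p` is odd, and the bimultiplicative
map `(s, t) ↦ [[[s, t], g], h]`, trivial on the generators, is trivial. Thus the fourth term of
the lower central series lies in the fifth, so it is trivial because `G` is nilpotent.
-/

/-- A finite `p`-group (`p` odd) is powerful if `[G,G] ≤ G^p`. -/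
def IsPowerfulOdd (p : ℕ) (G : Type*) [Group G] : Prop :=
  commutator G ≤ Subgroup.closure {x : G | ∃ g : G, g ^ p = x}

open Subgroup
open scoped commutatorElement

-- Mathlib's indexing: `γ 0 = ⊤` and `γ 1 = commutator G`, so `γ 3 = ⊥` means class at most 3.
local notation "γ" n:max => Subgroup.lowerCentralSeries ⊤ n

section CommutatorCalculus

variable {G : Type*} [Group G] {x y z : G}

theorem commutatorElement_mul_left_of_commute (h : Commute x ⁅y, z⁆) :
    ⁅x * y, z⁆ = ⁅y, z⁆ * ⁅x, z⁆ := by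
  rw [commutatorElement_mul_left_eq_conj_mul, h.eq, mul_inv_cancel_right]

theorem commutatorElement_mul_right_of_commute (h : Commute y ⁅x, z⁆) :
    ⁅x, y * z⁆ = ⁅x, y⁆ * ⁅x, z⁆ := by
  rw [commutatorElement_mul_right_eq_mul_conj, mul_assoc _ y, h.eq, mul_assoc,
    mul_inv_cancel_right]

theorem commutatorElement_inv_left_of_commute (h : Commute x ⁅x, y⁆) :
    ⁅x⁻¹, y⁆ = ⁅x, y⁆⁻¹ := by
  rw [commutatorElement_inv_left, ← commutatorElement_inv, mul_assoc, ← h.inv_right.eq,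
    inv_mul_cancel_left]

theorem commutatorElement_mul_eq_of_mem_center (hz : z ∈ center G) : ⁅x * z, y⁆ = ⁅x, y⁆ := by
  have hzy : ⁅z, y⁆ = 1 := commutatorElement_eq_one_iff_mul_comm.mpr (mem_center_iff.mp hz y).symm
  rw [commutatorElement_mul_left_of_commute (hzy ▸ Commute.one_right x), hzy, one_mul]

theorem commutatorElement_pow_left_of_commute (h : Commute x ⁅x, y⁆) (n : ℕ) :
    ⁅x ^ n, y⁆ = ⁅x, y⁆ ^ n := by
  induction n with
  | zero => simp
  | succ n ih =>
    rw [pow_succ', commutatorElement_mul_left_of_commute (ih ▸ h.pow_right n), ih, pow_succ]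

theorem commutatorElement_pow_right_of_commute (h : Commute y ⁅x, y⁆) (n : ℕ) :
    ⁅x, y ^ n⁆ = ⁅x, y⁆ ^ n := by
  induction n with
  | zero => simp
  | succ n ih =>
    rw [pow_succ', commutatorElement_mul_right_of_commute (ih ▸ h.pow_right n), ih, pow_succ']

-- The Hall–Petrescu formula, which stops after two factors when `⁅x, ⁅x, y⁆⁆` is central.
theorem commutatorElement_pow_left_of_mem_center (h : ⁅x, ⁅x, y⁆⁆ ∈ center G) (n : ℕ) :
    ⁅x ^ n, y⁆ = ⁅x, y⁆ ^ n * ⁅x, ⁅x, y⁆⁆ ^ n.choose 2 := by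
  set d := ⁅x, y⁆
  set w := ⁅x, d⁆
  have hw : ∀ g, Commute g w := mem_center_iff.mp h
  induction n with
  | zero => simp
  | succ n ih =>
    rw [pow_succ']
    calc ⁅x * x ^ n, y⁆ = x * (d ^ n * w ^ n.choose 2) * x⁻¹ * d := by
          rw [commutatorElement_mul_left_eq_conj_mul, ih]
      _ = (x * d * x⁻¹) ^ n * w ^ n.choose 2 * d := by
          rw [conj_pow, mul_assoc x, mul_assoc _ _ x⁻¹, ← ((hw x⁻¹).pow_right _).eq]
          simp only [mul_assoc]
      _ = d ^ n * w ^ (n + n.choose 2) * d := by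
          rw [← MulAut.conj_apply, conj_eq_commutatorElement_mul, (hw d).symm.mul_pow,
            ← ((hw _).pow_right n).eq, mul_assoc (d ^ n), ← pow_add]
      _ = d ^ (n + 1) * w ^ (n + 1).choose 2 := by
          rw [mul_assoc, ((hw d).pow_right _).symm.eq, ← mul_assoc, ← pow_succ,
            Nat.choose_succ_succ, Nat.choose_one_right]

theorem eq_one_of_bimultiplicative_of_closure_eq_top {H : Type*} [Group H] {S : Set G}
    (hS : closure S = ⊤) (f : G → G → H) (hl : ∀ s s' t, f (s * s') t = f s t * f s' t)
    (hr : ∀ s t t', f s (t * t') = f s t * f s t') (hS1 : ∀ s ∈ S, ∀ t ∈ S, f s t = 1)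
    (s t : G) : f s t = 1 := by
  have key : ∀ φ : G →* H, (∀ s ∈ S, φ s = 1) → ∀ s, φ s = 1 := fun φ hφ s =>
    ((closure_le φ.ker).mpr hφ) (hS ▸ mem_top s)
  exact key (MonoidHom.mk' (f · t) (hl · · t))
    (fun s hs => key (MonoidHom.mk' (f s) (hr s)) (hS1 s hs) t) s

end CommutatorCalculus

section Powerful

variable {p : ℕ} {G H : Type*} [Group G] [Group H]

variable (p G) in
def powSubgroup : Subgroup G :=
  closure {x : G | ∃ g : G, g ^ p = x}

theorem pow_mem_powSubgroup (g : G) : g ^ p ∈ powSubgroup p G :=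
  subset_closure ⟨g, rfl⟩

theorem map_powSubgroup_le (f : G →* H) : (powSubgroup p G).map f ≤ powSubgroup p H := by
  rw [powSubgroup, MonoidHom.map_closure, closure_le]
  rintro _ ⟨_, ⟨g, rfl⟩, rfl⟩
  simpa using pow_mem_powSubgroup (f g)

theorem IsPowerfulOdd.of_surjective {f : G →* H} (hf : Function.Surjective f)
    (h : IsPowerfulOdd p G) : IsPowerfulOdd p H := by
  have hcomm : (commutator G).map f = commutator H := by
    rw [map_commutator_eq, MonoidHom.range_eq_top.mpr hf, commutator_def]
  show commutator H ≤ powSubgroup p H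
  exact hcomm ▸ (map_mono h).trans (map_powSubgroup_le f)

theorem pow_eq_one_of_mem_powSubgroup (hexp : ∀ x : G, x ^ p ^ 2 = 1)
    (hZ2 : ∀ c ∈ powSubgroup p G, ∀ y, ⁅c, y⁆ ∈ center G) {c : G} (hc : c ∈ powSubgroup p G) :
    c ^ p = 1 := by
  have hcomm : ∀ x y : G, Commute (x ^ p) (y ^ p) := fun x y => by
    have hc := mem_center_iff.mp (hZ2 _ (pow_mem_powSubgroup x) y)
    rw [← commutatorElement_eq_one_iff_commute, commutatorElement_pow_right_of_commute (hc y),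
      ← commutatorElement_pow_left_of_commute (hc _), ← pow_mul, ← sq, hexp,
      commutatorElement_one_left]
  have hcommP : IsMulCommutative (powSubgroup p G) :=
    isMulCommutative_closure (by rintro _ ⟨x, rfl⟩ _ ⟨y, rfl⟩; exact hcomm x y)
  induction hc using closure_induction with
  | mem _ hx => obtain ⟨x, rfl⟩ := hx; rw [← pow_mul, ← sq, hexp]
  | one => exact one_pow p
  | mul c d hc hd hcp hdp =>
    have hcd : Commute c d := congrArg Subtype.val (hcommP.is_comm.comm ⟨c, hc⟩ ⟨d, hd⟩)
    rw [hcd.mul_pow, hcp, hdp, one_mul]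
  | inv c _ hcp => rw [inv_pow, hcp, inv_one]

theorem powSubgroup_le_center_of_commutatorElement_mem_center (hp : p.Prime) (hodd : Odd p)
    (hexp : ∀ x : G, x ^ p ^ 2 = 1) (hpow : IsPowerfulOdd p G)
    (hZ2 : ∀ c ∈ powSubgroup p G, ∀ y, ⁅c, y⁆ ∈ center G) :
    powSubgroup p G ≤ center G := by
  rw [powSubgroup, closure_le]
  rintro _ ⟨x, rfl⟩
  rw [SetLike.mem_coe, mem_center_iff]
  intro y
  have hd : ⁅x, y⁆ ∈ powSubgroup p G :=
    hpow (commutator_mem_commutator (mem_top x) (mem_top y))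
  have hdp : ⁅x, y⁆ ^ p = 1 := pow_eq_one_of_mem_powSubgroup hexp hZ2 hd
  have hw : ⁅x, ⁅x, y⁆⁆ ∈ center G := by
    rw [← commutatorElement_inv]
    exact inv_mem (hZ2 _ hd x)
  have hwp : ⁅x, ⁅x, y⁆⁆ ^ p = 1 := by
    rw [← commutatorElement_pow_right_of_commute (mem_center_iff.mp hw _), hdp,
      commutatorElement_one_right]
  have hp2 : 2 < p := hp.two_le.lt_of_ne (hodd.ne_two_of_dvd_nat dvd_rfl).symm
  obtain ⟨k, hk⟩ := hp.dvd_choose_self two_ne_zero hp2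
  rw [eq_comm, ← commutatorElement_eq_one_iff_mul_comm,
    commutatorElement_pow_left_of_mem_center hw, hdp, hk, pow_mul, hwp, one_pow, one_mul]

theorem IsPowerfulOdd.powSubgroup_le_center [Finite G] (hp : p.Prime)
    (hodd : Odd p) (hG : IsPGroup p G) (hexp : ∀ x : G, x ^ p ^ 2 = 1)
    (hpow : IsPowerfulOdd p G) : powSubgroup p G ≤ center G := by
  have := Fact.mk hp
  induction hn : Nat.card G using Nat.strong_induction_on generalizing G with
  | _ n ih =>
  rcases subsingleton_or_nontrivial G with _ | _
  · intro x _
    exact Subsingleton.elim 1 x ▸ one_mem _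
  apply powSubgroup_le_center_of_commutatorElement_mem_center hp hodd hexp hpow
  intro c hc y
  have hlt : Nat.card (G ⧸ center G) < n := by
    have := hG.center_nontrivial
    rw [← hn, card_eq_card_quotient_mul_card_subgroup (center G)]
    exact lt_mul_of_one_lt_right Nat.card_pos Finite.one_lt_card
  have hexpQ : ∀ q : G ⧸ center G, q ^ p ^ 2 = 1 := by
    intro q
    obtain ⟨x, rfl⟩ := QuotientGroup.mk_surjective q
    rw [← QuotientGroup.mk_pow, hexp, QuotientGroup.mk_one]
  have hQ := ih _ hlt (hG.to_quotient _) hexpQ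
    (hpow.of_surjective (QuotientGroup.mk'_surjective (center G))) rfl
  have hcQ := hQ (map_powSubgroup_le (QuotientGroup.mk' (center G)) (mem_map_of_mem _ hc))
  rw [← QuotientGroup.ker_mk' (center G), MonoidHom.mem_ker, map_commutatorElement,
    commutatorElement_eq_one_iff_mul_comm]
  exact (mem_center_iff.mp hcQ _).symm

theorem IsPowerfulOdd.lowerCentralSeries_two_eq_bot [Finite G]
    (hp : p.Prime) (hodd : Odd p) (hG : IsPGroup p G) (hexp : ∀ x : G, x ^ p ^ 2 = 1)
    (hpow : IsPowerfulOdd p G) : (γ 2 : Subgroup G) = ⊥ :=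
  Subgroup.lowerCentralSeries_succ_eq_bot ⊤
    (le_trans hpow (hpow.powSubgroup_le_center hp hodd hG hexp))

end Powerful

section PGroup
variable {p : ℕ} {G : Type*} [Group G]

theorem IsPGroup.exists_le_index_eq_of_ne_top [Finite G] (hp : p.Prime) (hG : IsPGroup p G)
    {K : Subgroup G} (hK : K ≠ ⊤) : ∃ M : Subgroup G, K ≤ M ∧ M.index = p := by
  have := Fact.mk hp
  obtain ⟨m, hm⟩ := hG.exists_card_eq
  obtain ⟨k, hk⟩ := (hG.to_subgroup K).exists_card_eq
  have hkm : k < m := by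
    rw [← Nat.pow_lt_pow_iff_right hp.one_lt, ← hk, ← hm]
    exact K.card_le_card_group.lt_of_ne (mt K.card_eq_iff_eq_top.mp hK)
  obtain ⟨M, hM, hKM⟩ := Sylow.exists_subgroup_card_pow_prime_le p
    (hm ▸ pow_dvd_pow p (m.sub_le 1)) K hk (Nat.le_sub_one_of_lt hkm)
  have hMG := card_mul_index M
  rw [hM, hm, ← Nat.sub_add_cancel (k.zero_le.trans_lt hkm), pow_succ, Nat.add_sub_cancel] at hMG
  exact ⟨M, hKM, Nat.eq_of_mul_eq_mul_left (pow_pos hp.pos _) hMG⟩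

theorem IsPGroup.commutator_le_of_index_eq [Finite G] (hp : p.Prime) (hG : IsPGroup p G)
    {M : Subgroup G} (hM : M.index = p) : commutator G ≤ M := by
  have := Fact.mk hp
  obtain ⟨m, hm⟩ := hG.exists_card_eq
  have hm0 : m ≠ 0 := by
    rintro rfl
    have := M.index_dvd_card
    rw [hM, hm, pow_zero, Nat.dvd_one] at this
    exact hp.one_lt.ne' this
  have : M.Normal :=
    normal_of_index_eq_minFac_card (by rw [hM, hm, Nat.pow_minFac hm0, hp.minFac_eq])
  have : IsCyclic (G ⧸ M) := isCyclic_of_prime_card (index_eq_card M ▸ hM)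
  exact Normal.quotient_commutative_iff_commutator_le.mp IsCyclic.isMulCommutative

theorem IsPGroup.eq_one_of_sq_eq_one [Finite G] (hp : p.Prime) (hodd : Odd p)
    (hG : IsPGroup p G) {x : G} (hx : x ^ 2 = 1) : x = 1 := by
  have := Fact.mk hp
  refine (hG.powEquiv' (n := 2) fun h => ?_).injective (hx.trans (one_pow 2).symm)
  exact hodd.not_two_dvd_nat ((Nat.prime_dvd_prime_iff_eq hp Nat.prime_two).mp h ▸ dvd_rfl)

end PGroup

section LowerCentralSeries
variable {G H : Type*} [Group G] [Group H]

theorem lowerCentralSeries_eq_bot_of_index_eq_of_surjective {p n : ℕ} {f : G →* H}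
    (hf : Function.Surjective f)
    (hG : ∀ M : Subgroup G, M.index = p → M.lowerCentralSeries n = ⊥)
    {N : Subgroup H} (hN : N.index = p) : N.lowerCentralSeries n = ⊥ := by
  rw [← map_comap_eq_self_of_surjective hf N, ← map_lowerCentralSeries,
    hG _ ((index_comap_of_surjective N hf).trans hN), Subgroup.map_bot]

theorem lowerCentralSeries_eq_bot_of_le_succ [Group.IsNilpotent G] {n : ℕ}
    (h : (γ n : Subgroup G) ≤ γ (n + 1)) : (γ n : Subgroup G) = ⊥ := by
  have hle : ∀ k, (γ n : Subgroup G) ≤ γ (n + k) := by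
    intro k
    induction k with
    | zero => rfl
    | succ k ih => exact h.trans (commutator_mono ih le_rfl)
  obtain ⟨m, hm⟩ := Subgroup.nilpotent_iff_lowerCentralSeries.mp ‹_›
  exact le_bot_iff.mp
    (hm ▸ (hle m).trans (Subgroup.lowerCentralSeries_antitone _ (m.le_add_left n)))

end LowerCentralSeries

section MacDonald

variable {G : Type*} [Group G] {a b c d g h : G}

theorem commutatorElement_commutatorElement_eq_one_of_lowerCentralSeries_two_eq_bot
    {M : Subgroup G} (hM : M.lowerCentralSeries 2 = ⊥) (ha : a ∈ M) (hg : g ∈ M) (hh : h ∈ M) :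
    ⁅⁅a, g⁆, h⁆ = 1 := by
  have : ⁅⁅a, g⁆, h⁆ ∈ M.lowerCentralSeries 2 :=
    commutator_mem_commutator (commutator_mem_commutator ha hg) hh
  rwa [hM, mem_bot] at this

theorem commutatorElement_mem_lowerCentralSeries_two (ha : a ∈ commutator G) (g : G) :
    ⁅a, g⁆ ∈ γ 2 :=
  commutator_mem_commutator ha (mem_top g)

theorem commutatorElement_mem_lowerCentralSeries_two' (ha : a ∈ commutator G) (g : G) :
    ⁅g, a⁆ ∈ γ 2 :=
  commutatorElement_inv a g ▸ inv_mem (commutatorElement_mem_lowerCentralSeries_two ha g)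

theorem commute_commutatorElement_of_mem_lowerCentralSeries_two (hcen : γ 3 ≤ center G)
    (hc : c ∈ γ 2) (g h : G) : Commute g ⁅c, h⁆ :=
  mem_center_iff.mp (hcen (commutator_mem_commutator hc (mem_top h))) g

theorem commutatorElement_commutatorElement_eq_one_of_mem_lowerCentralSeries_two
    (hcen : γ 3 ≤ center G) (hc : c ∈ γ 2) (g h : G) : ⁅⁅c, g⁆, h⁆ = 1 :=
  (commute_commutatorElement_of_mem_lowerCentralSeries_two hcen hc h g).symm.commutator_eq

theorem commutatorElement_mul_right_eq_of_mem_commutator (hcen : γ 3 ≤ center G)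
    (hcomm : γ 2 ≤ centralizer (commutator G : Set G)) (hc : c ∈ γ 2) (hd : d ∈ commutator G)
    (k : G) : ⁅c, d * k⁆ = ⁅c, k⁆ := by
  rw [commutatorElement_mul_right_of_commute
      (commute_commutatorElement_of_mem_lowerCentralSeries_two hcen hc d k),
    commutatorElement_eq_one_iff_mul_comm.mpr (mem_centralizer_iff.mp (hcomm hc) d hd).symm,
    one_mul]

theorem commutatorElement_commutatorElement_mul_left (hcen : γ 3 ≤ center G)
    (hcomm : γ 2 ≤ centralizer (commutator G : Set G)) (ha : a ∈ commutator G)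
    (hb : b ∈ commutator G) (g h : G) : ⁅⁅a * b, g⁆, h⁆ = ⁅⁅a, g⁆, h⁆ * ⁅⁅b, g⁆, h⁆ := by
  rw [commutatorElement_mul_left_of_commute
      (mem_centralizer_iff.mp (hcomm (commutatorElement_mem_lowerCentralSeries_two hb g)) a ha),
    commutatorElement_mul_left_of_commute
      (commute_commutatorElement_of_mem_lowerCentralSeries_two hcen
        (commutatorElement_mem_lowerCentralSeries_two ha g) _ h)]

theorem commutatorElement_commutatorElement_inv_left (hcen : γ 3 ≤ center G)
    (hcomm : γ 2 ≤ centralizer (commutator G : Set G)) (ha : a ∈ commutator G) (g h : G) :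
    ⁅⁅a⁻¹, g⁆, h⁆ = ⁅⁅a, g⁆, h⁆⁻¹ := by
  refine eq_inv_of_mul_eq_one_left ?_
  rw [← commutatorElement_commutatorElement_mul_left hcen hcomm (inv_mem ha) ha, inv_mul_cancel,
    commutatorElement_one_left, commutatorElement_one_left]

theorem commutatorElement_commutatorElement_conj_left (hcen : γ 3 ≤ center G)
    (hcomm : γ 2 ≤ centralizer (commutator G : Set G)) (ha : a ∈ commutator G) (s g h : G) :
    ⁅⁅s * a * s⁻¹, g⁆, h⁆ = ⁅⁅a, g⁆, h⁆ := by
  rw [← MulAut.conj_apply, conj_eq_commutatorElement_mul,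
    commutatorElement_commutatorElement_mul_left hcen hcomm
      (commutator_mem_commutator (mem_top s) (mem_top a)) ha,
    commutatorElement_commutatorElement_eq_one_of_mem_lowerCentralSeries_two hcen
      (commutatorElement_mem_lowerCentralSeries_two' ha s), one_mul]

theorem commutatorElement_commutatorElement_mul_mid (hcen : γ 3 ≤ center G)
    (ha : a ∈ commutator G) (g g' h : G) :
    ⁅⁅a, g * g'⁆, h⁆ = ⁅⁅a, g⁆, h⁆ * ⁅⁅a, g'⁆, h⁆ := by
  have hag' := commutatorElement_mem_lowerCentralSeries_two ha g'
  have hz : ⁅g, ⁅a, g'⁆⁆ ∈ center G := by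
    rw [← commutatorElement_inv]
    exact inv_mem (hcen (commutator_mem_commutator hag' (mem_top g)))
  have e : ⁅a, g * g'⁆ = ⁅a, g⁆ * ⁅g, ⁅a, g'⁆⁆ * ⁅a, g'⁆ := by
    simp only [commutatorElement_def]; group
  rw [e, commutatorElement_mul_left_of_commute
      (commute_commutatorElement_of_mem_lowerCentralSeries_two hcen hag' _ h),
    commutatorElement_mul_eq_of_mem_center hz,
    commute_commutatorElement_of_mem_lowerCentralSeries_two hcen hag' _ h]

theorem commutatorElement_commutatorElement_mul_right (hcen : γ 3 ≤ center G)
    (ha : a ∈ commutator G) (g h h' : G) :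
    ⁅⁅a, g⁆, h * h'⁆ = ⁅⁅a, g⁆, h⁆ * ⁅⁅a, g⁆, h'⁆ :=
  commutatorElement_mul_right_of_commute
    (commute_commutatorElement_of_mem_lowerCentralSeries_two hcen
      (commutatorElement_mem_lowerCentralSeries_two ha g) h h')

theorem commutatorElement_commutatorElement_swap (hcen : γ 3 ≤ center G)
    (ha : a ∈ commutator G) (hdiag : ∀ u : G, ⁅⁅a, u⁆, u⁆ = 1) (g h : G) :
    ⁅⁅a, h⁆, g⁆ = ⁅⁅a, g⁆, h⁆⁻¹ := by
  refine eq_inv_of_mul_eq_one_left ?_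
  have := hdiag (g * h)
  rwa [commutatorElement_commutatorElement_mul_right hcen ha,
    commutatorElement_commutatorElement_mul_mid hcen ha,
    commutatorElement_commutatorElement_mul_mid hcen ha, hdiag, hdiag, one_mul, mul_one] at this

/-- The Hall–Witt identity is the group form of the Jacobi identity
`[[x, g], h] + [[g, h], x] + [[h, x], g] = 0`; at `x = [g, h]` the middle term vanishes, and
antisymmetry in `g, h` turns the rest into `2 [[x, g], h] = 0`. -/
theorem commutatorElement_commutatorElement_commutatorElement_eq_one (hcen : γ 3 ≤ center G)
    (hcomm : γ 2 ≤ centralizer (commutator G : Set G)) (htwo : ∀ x : G, x ^ 2 = 1 → x = 1)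
    (hdiag : ∀ u : G, ⁅⁅⁅g, h⁆, u⁆, u⁆ = 1) : ⁅⁅⁅g, h⁆, g⁆, h⁆ = 1 := by
  set x := ⁅g, h⁆
  have hx : x ∈ commutator G := commutator_mem_commutator (mem_top g) (mem_top h)
  have hxh := commutatorElement_mem_lowerCentralSeries_two hx h
  have hhx := commutatorElement_mem_lowerCentralSeries_two' hx h
  have hconj : ∀ u v : G, u * v * u⁻¹ = ⁅u, v⁆ * v := fun u v => by
    simp only [commutatorElement_def]; group
  have hw := commutatorElement_commutatorElement_conj_mul x g h
  rw [hconj g h, commutatorElement_mul_right_eq_of_mem_commutator hcen hcomm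
      (commutatorElement_mem_lowerCentralSeries_two hx g) hx,
    hconj h x, show ⁅g, h⁆ = x from rfl,
    (Commute.mul_right (mem_centralizer_iff.mp (hcomm hhx) x hx) (Commute.refl x)).commutator_eq,
    hconj x g, commutatorElement_mul_right_eq_of_mem_commutator hcen hcomm hhx
      (Subgroup.lowerCentralSeries_antitone ⊤ one_le_two
        (commutatorElement_mem_lowerCentralSeries_two hx g)),
    ← commutatorElement_inv x h, commutatorElement_inv_left_of_commute
      (commute_commutatorElement_of_mem_lowerCentralSeries_two hcen hxh _ g),
    commutatorElement_commutatorElement_swap hcen hx hdiag g h, inv_inv, mul_one] at hw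
  exact htwo _ (by rw [sq, hw])

theorem commutatorElement_commutatorElement_commutatorElement_eq_one_of_closure_eq_top
    (hcen : γ 3 ≤ center G) (hcomm : γ 2 ≤ centralizer (commutator G : Set G))
    (htwo : ∀ x : G, x ^ 2 = 1 → x = 1) (hdiag : ∀ u : G, ⁅⁅⁅g, h⁆, u⁆, u⁆ = 1)
    (hgh : closure {g, h} = ⊤) (s t : G) : ⁅⁅⁅s, t⁆, g⁆, h⁆ = 1 := by
  have hmem : ∀ s t : G, ⁅s, t⁆ ∈ commutator G := fun s t =>
    commutator_mem_commutator (mem_top s) (mem_top t)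
  have hconj : ∀ {s a : G}, a ∈ commutator G → s * a * s⁻¹ ∈ commutator G := fun ha =>
    (commutator_normal ⊤ ⊤).conj_mem _ ha _
  refine eq_one_of_bimultiplicative_of_closure_eq_top hgh (fun s t => ⁅⁅⁅s, t⁆, g⁆, h⁆)
    (fun s s' t => ?_) (fun s t t' => ?_) (fun s hs t ht => ?_) s t
  · rw [commutatorElement_mul_left_eq_conj_mul,
      commutatorElement_commutatorElement_mul_left hcen hcomm (hconj (hmem s' t)) (hmem s t),
      commutatorElement_commutatorElement_conj_left hcen hcomm (hmem s' t),
      commute_commutatorElement_of_mem_lowerCentralSeries_two hcen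
        (commutatorElement_mem_lowerCentralSeries_two (hmem s t) g) _ h]
  · rw [commutatorElement_mul_right_eq_mul_conj, mul_assoc ⁅s, t⁆ t, mul_assoc ⁅s, t⁆,
      commutatorElement_commutatorElement_mul_left hcen hcomm (hmem s t) (hconj (hmem s t')),
      commutatorElement_commutatorElement_conj_left hcen hcomm (hmem s t')]
  · have hstar :=
      commutatorElement_commutatorElement_commutatorElement_eq_one hcen hcomm htwo hdiag
    simp only [Set.mem_insert_iff, Set.mem_singleton_iff] at hs ht
    rcases hs with hs | hs <;> rcases ht with ht | ht <;> rw [hs, ht]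
    · simp
    · exact hstar
    · rw [← commutatorElement_inv g h,
        commutatorElement_commutatorElement_inv_left hcen hcomm (hmem g h), hstar, inv_one]
    · simp

theorem lowerCentralSeries_three_eq_bot_of_commutatorElement_eq_one (hcen : γ 3 ≤ center G)
    (hcomm : γ 2 ≤ centralizer (commutator G : Set G))
    (h1 : ∀ s t g h : G, ⁅⁅⁅s, t⁆, g⁆, h⁆ = 1) : (γ 3 : Subgroup G) = ⊥ := by
  refine commutator_top_right_eq_bot_iff_le_center.mpr ?_
  rw [show (γ 2 : Subgroup G) = ⁅commutator G, ⊤⁆ from rfl, commutator_le]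
  intro a ha g _
  rw [mem_center_iff]
  intro h
  suffices ⁅⁅a, g⁆, h⁆ = 1 from (commutatorElement_eq_one_iff_mul_comm.mp this).symm
  rw [commutator_eq_closure] at ha
  induction ha using closure_induction with
  | mem x hx => obtain ⟨s, t, rfl⟩ := hx; exact h1 s t g h
  | one => simp
  | mul x y hx hy ihx ihy =>
    rw [← commutator_eq_closure] at hx hy
    rw [commutatorElement_commutatorElement_mul_left hcen hcomm hx hy, ihx, ihy, one_mul]
  | inv x hx ihx =>
    rw [← commutator_eq_closure] at hx
    rw [commutatorElement_commutatorElement_inv_left hcen hcomm hx, ihx, inv_one]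

theorem lowerCentralSeries_three_eq_bot_of_forall_ne_top (h4 : (γ 4 : Subgroup G) = ⊥)
    (hM : ∀ K : Subgroup G, K ≠ ⊤ →
      ∃ M : Subgroup G, K ≤ M ∧ commutator G ≤ M ∧ M.lowerCentralSeries 2 = ⊥)
    (htwo : ∀ x : G, x ^ 2 = 1 → x = 1) : (γ 3 : Subgroup G) = ⊥ := by
  by_cases hcyc : ∃ g : G, closure {g} = ⊤
  · obtain ⟨g, hg⟩ := hcyc
    have : IsCyclic G :=
      isCyclic_iff_exists_zpowers_eq_top.mpr ⟨g, (zpowers_eq_closure g).trans hg⟩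
    have h1 : (γ 1 : Subgroup G) = ⊥ :=
      Subgroup.lowerCentralSeries_one_eq_bot_iff.mpr IsCyclic.isMulCommutative
    exact le_bot_iff.mp (h1 ▸ Subgroup.lowerCentralSeries_antitone ⊤ (by norm_num : 1 ≤ 3))
  push Not at hcyc
  have hcen : γ 3 ≤ center G := commutator_top_right_eq_bot_iff_le_center.mp h4
  have hclass : ∀ g h : G, closure {g, h} ≠ ⊤ →
      ∀ a ∈ commutator G, ∀ k ∈ commutator G ⊔ closure {h}, ⁅⁅a, g⁆, k⁆ = 1 := by
    intro g h hgh a ha k hk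
    obtain ⟨M, hgM, hGM, hM2⟩ := hM _ hgh
    have hg : g ∈ M := hgM (subset_closure (by simp))
    have hh : closure {h} ≤ M := (Subgroup.closure_mono (by simp)).trans hgM
    exact commutatorElement_commutatorElement_eq_one_of_lowerCentralSeries_two_eq_bot hM2
      (hGM ha) hg (sup_le hGM hh hk)
  have hsingle : ∀ g : G, closure {g, g} ≠ ⊤ := fun g => by
    rw [Set.pair_eq_singleton]; exact hcyc g
  have hcomm : γ 2 ≤ centralizer (commutator G : Set G) := by
    rw [show (γ 2 : Subgroup G) = ⁅commutator G, ⊤⁆ from rfl, commutator_le]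
    intro a ha g _
    rw [mem_centralizer_iff]
    intro k hk
    exact (commutatorElement_eq_one_iff_mul_comm.mp
      (hclass g g (hsingle g) a ha k (mem_sup_left hk))).symm
  have hdiag : ∀ a ∈ commutator G, ∀ u : G, ⁅⁅a, u⁆, u⁆ = 1 := fun a ha u =>
    hclass u u (hsingle u) a ha u (mem_sup_right (mem_closure_singleton_self u))
  refine lowerCentralSeries_three_eq_bot_of_commutatorElement_eq_one hcen hcomm fun s t g h => ?_
  by_cases hgh : closure {g, h} = ⊤
  · exact commutatorElement_commutatorElement_commutatorElement_eq_one_of_closure_eq_top hcen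
      hcomm htwo (hdiag _ (commutator_mem_commutator (mem_top g) (mem_top h))) hgh s t
  · exact hclass g h hgh _ (commutator_mem_commutator (mem_top s) (mem_top t)) h
      (mem_sup_right (mem_closure_singleton_self h))

end MacDonald

theorem IsPGroup.lowerCentralSeries_three_eq_bot {p : ℕ} {G : Type*} [Group G] [Finite G]
    (hp : p.Prime) (hodd : Odd p) (hG : IsPGroup p G)
    (hM : ∀ M : Subgroup G, M.index = p → M.lowerCentralSeries 2 = ⊥) :
    (γ 3 : Subgroup G) = ⊥ := by
  have := Fact.mk hp
  set N := (γ 4 : Subgroup G)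
  have hπ := QuotientGroup.mk'_surjective N
  have hmap : ∀ n, (γ n : Subgroup G).map (QuotientGroup.mk' N) = γ n := fun n => by
    rw [map_lowerCentralSeries, ← MonoidHom.range_eq_map, MonoidHom.range_eq_top.mpr hπ]
  have hGQ := hG.to_quotient N
  have hQ : (γ 3 : Subgroup (G ⧸ N)) = ⊥ := by
    refine lowerCentralSeries_three_eq_bot_of_forall_ne_top ?_ (fun K hK => ?_)
      (fun x hx => hGQ.eq_one_of_sq_eq_one hp hodd hx)
    · rw [← hmap, Subgroup.map_eq_bot_iff, QuotientGroup.ker_mk']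
    · obtain ⟨M, hKM, hMp⟩ := hGQ.exists_le_index_eq_of_ne_top hp hK
      exact ⟨M, hKM, hGQ.commutator_le_of_index_eq hp hMp,
        lowerCentralSeries_eq_bot_of_index_eq_of_surjective hπ hM hMp⟩
  have := hG.isNilpotent
  refine lowerCentralSeries_eq_bot_of_le_succ ?_
  rw [show (γ (3 + 1) : Subgroup G) = N from rfl, ← QuotientGroup.ker_mk' N,
    ← Subgroup.map_eq_bot_iff, hmap, hQ]

theorem stmt10 (p : ℕ) (hp : p.Prime) (hodd : Odd p) (G : Type*) [Group G] [Finite G]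
    (hG : IsPGroup p G) (hexp : Monoid.exponent G = p ^ 2)
    (hM : ∀ M : Subgroup G, M.index = p → IsPowerfulOdd p M) :
    (⊤ : Subgroup G).lowerCentralSeries 3 = ⊥ := by
  refine hG.lowerCentralSeries_three_eq_bot hp hodd fun M hMp => ?_
  have hexpM : ∀ x : M, x ^ p ^ 2 = 1 := fun x =>
    Subtype.ext (by simpa [hexp] using Monoid.pow_exponent_eq_one (x : G))
  rw [← top_subtype_lowerCentralSeries,
    (hM M hMp).lowerCentralSeries_two_eq_bot hp hodd (hG.to_subgroup M) hexpM, Subgroup.map_bot]
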